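/- Define Γ(N) for a quantum channel N with Choi matrix J_N as the supremum of tr(J_N R) over positive semidefinite R on A⊗B and density operators ρ on A satisfying -ρ⊗I ≤ R^{T_B} ≤ ρ⊗I. Then Γ is multiplicative under tensor products: Γ(N₁⊗N₂) ≥ Γ(N₁)·Γ(N₂), witnessed by the tensor product of feasible solutions. -/

import Mathlib

open Matrix Kronecker ComplexOrder

/-- Partial transpose on the second (B) system of a bipartite matrix. -/
def ptB {A B : Type*} (M : Matrix (A × B) (A × B) ℂ) : Matrix (A × B) (A × B) ℂ :=
  Matrix.of fun p q => M (p.1, q.2) (q.1, p.2)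

/-- The SDP value `Γ(N)` of a channel with Choi matrix `J`: the supremum of
`tr(J R)` over PSD `R` and density operators `ρ` with `-ρ⊗I ≤ R^{T_B} ≤ ρ⊗I`. -/
noncomputable def Gamma {A B : Type*} [Fintype A] [Fintype B] [DecidableEq A] [DecidableEq B]
    (J : Matrix (A × B) (A × B) ℂ) : ℝ :=
  sSup {r | ∃ (R : Matrix (A × B) (A × B) ℂ) (ρ : Matrix A A ℂ),
    R.PosSemidef ∧ ρ.PosSemidef ∧ ρ.trace = 1 ∧
    (ρ ⊗ₖ (1 : Matrix B B ℂ) - ptB R).PosSemidef ∧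
    (ptB R + ρ ⊗ₖ (1 : Matrix B B ℂ)).PosSemidef ∧
    r = ((J * R).trace).re}

/-!
Feasible pairs multiply: if `(R₁, ρ₁)` and `(R₂, ρ₂)` are feasible, so is `(R₁ ⊗ R₂, ρ₁ ⊗ ρ₂)`.
The partial transpose of `R₁ ⊗ R₂` is `R₁^{T_B} ⊗ R₂^{T_B}`, and `-Xᵢ ≤ Yᵢ ≤ Xᵢ` gives
`-X₁ ⊗ X₂ ≤ Y₁ ⊗ Y₂ ≤ X₁ ⊗ X₂` through
`2 (X₁ ⊗ X₂ - Y₁ ⊗ Y₂) = (X₁ - Y₁) ⊗ (X₂ + Y₂) + (X₁ + Y₁) ⊗ (X₂ - Y₂)` and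
`2 (X₁ ⊗ X₂ + Y₁ ⊗ Y₂) = (X₁ + Y₁) ⊗ (X₂ + Y₂) + (X₁ - Y₁) ⊗ (X₂ - Y₂)`,
all four summands being tensor products of PSD matrices. The objective is multiplicative,
`tr ((J₁ ⊗ J₂)(R₁ ⊗ R₂)) = tr (J₁ R₁) tr (J₂ R₂)`, and these values are nonnegative as `Jᵢ ≥ 0`.
Passing to suprema also needs the value set of the product to be bounded, as `sSup` of an
unbounded set of reals is `0`: `tr R = tr R^{T_B} ≤ tr (ρ ⊗ I) = |B|`, and a PSD matrix has
entries bounded by its trace.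
-/

namespace Matrix

variable {𝕜 : Type*} [RCLike 𝕜] {m n : Type*}

theorem PosSemidef.norm_apply_sq_le {M : Matrix n n 𝕜} (hM : M.PosSemidef) (i j : n) :
    ‖M i j‖ ^ 2 ≤ RCLike.re (M i i) * RCLike.re (M j j) := by
  classical
  have h := (hM.submatrix ![i, j]).det_nonneg
  rw [det_fin_two] at h
  simp only [submatrix_apply, cons_val_zero, cons_val_one, cons_val_fin_one, sub_nonneg] at h
  obtain ⟨a, -, ha⟩ := RCLike.nonneg_iff_exists_ofReal.mp (hM.diag_nonneg (i := i))
  obtain ⟨b, -, hb⟩ := RCLike.nonneg_iff_exists_ofReal.mp (hM.diag_nonneg (i := j))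
  rw [← hM.1.apply j i, RCLike.star_def, RCLike.mul_conj, ← ha, ← hb, ← RCLike.ofReal_mul] at h
  rw [← ha, ← hb, RCLike.ofReal_re, RCLike.ofReal_re]
  exact_mod_cast h

variable [Fintype m] [Fintype n]

theorem PosSemidef.trace_mul_nonneg {A B : Matrix n n 𝕜} (hA : A.PosSemidef)
    (hB : B.PosSemidef) : 0 ≤ (A * B).trace := by
  classical
  open scoped MatrixOrder in
  obtain ⟨C, rfl⟩ := CStarAlgebra.nonneg_iff_eq_star_mul_self.mp hB.nonneg
  rw [star_eq_conjTranspose, ← mul_assoc, trace_mul_comm, ← mul_assoc]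
  exact (hA.mul_mul_conjTranspose_same C).trace_nonneg

theorem PosSemidef.norm_apply_le_re_trace {M : Matrix n n 𝕜} (hM : M.PosSemidef) (i j : n) :
    ‖M i j‖ ≤ RCLike.re M.trace := by
  have hdiag : ∀ k, RCLike.re (M k k) ≤ RCLike.re M.trace := fun k => by
    rw [trace, map_sum]
    exact Finset.single_le_sum (f := fun l => RCLike.re (M l l))
      (fun _ _ => (RCLike.nonneg_iff.mp hM.diag_nonneg).1) (Finset.mem_univ k)
  have htrace : 0 ≤ RCLike.re M.trace := (RCLike.nonneg_iff.mp hM.trace_nonneg).1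
  refine (pow_le_pow_iff_left₀ (norm_nonneg _) htrace two_ne_zero).mp ?_
  calc ‖M i j‖ ^ 2 ≤ RCLike.re (M i i) * RCLike.re (M j j) := hM.norm_apply_sq_le i j
    _ ≤ RCLike.re M.trace * RCLike.re M.trace :=
      mul_le_mul (hdiag i) (hdiag j) (RCLike.nonneg_iff.mp hM.diag_nonneg).1 htrace
    _ = RCLike.re M.trace ^ 2 := (sq _).symm

theorem PosSemidef.re_trace_mul_le (J : Matrix n n 𝕜) {R : Matrix n n 𝕜} (hR : R.PosSemidef) :
    RCLike.re (J * R).trace ≤ (∑ i, ∑ j, ‖J i j‖) * RCLike.re R.trace :=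
  calc RCLike.re (J * R).trace ≤ ‖(J * R).trace‖ := RCLike.re_le_norm _
    _ ≤ ∑ i, ∑ j, ‖J i j‖ * ‖R j i‖ := by
      simp only [trace, diag, mul_apply, ← norm_mul]
      exact (norm_sum_le _ _).trans (Finset.sum_le_sum fun i _ => norm_sum_le _ _)
    _ ≤ ∑ i, ∑ j, ‖J i j‖ * RCLike.re R.trace := by
      gcongr with i _ j _
      exact hR.norm_apply_le_re_trace j i
    _ = (∑ i, ∑ j, ‖J i j‖) * RCLike.re R.trace := by simp only [Finset.sum_mul]

theorem posSemidef_kronecker_sub_kronecker {X₁ Y₁ : Matrix m m 𝕜} {X₂ Y₂ : Matrix n n 𝕜}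
    (h₁ : (X₁ - Y₁).PosSemidef) (h₁' : (Y₁ + X₁).PosSemidef)
    (h₂ : (X₂ - Y₂).PosSemidef) (h₂' : (Y₂ + X₂).PosSemidef) :
    (X₁ ⊗ₖ X₂ - Y₁ ⊗ₖ Y₂).PosSemidef := by
  have h : X₁ ⊗ₖ X₂ - Y₁ ⊗ₖ Y₂ =
      (2⁻¹ : ℝ) • ((X₁ - Y₁) ⊗ₖ (Y₂ + X₂) + (Y₁ + X₁) ⊗ₖ (X₂ - Y₂)) := by
    ext
    simp only [sub_apply, add_apply, smul_apply, kroneckerMap_apply, RCLike.real_smul_eq_coe_mul]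
    push_cast
    ring
  rw [h]
  exact ((h₁.kronecker h₂').add (h₁'.kronecker h₂)).smul (by norm_num)

theorem posSemidef_kronecker_add_kronecker {X₁ Y₁ : Matrix m m 𝕜} {X₂ Y₂ : Matrix n n 𝕜}
    (h₁ : (X₁ - Y₁).PosSemidef) (h₁' : (Y₁ + X₁).PosSemidef)
    (h₂ : (X₂ - Y₂).PosSemidef) (h₂' : (Y₂ + X₂).PosSemidef) :
    (Y₁ ⊗ₖ Y₂ + X₁ ⊗ₖ X₂).PosSemidef := by
  have h : Y₁ ⊗ₖ Y₂ + X₁ ⊗ₖ X₂ =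
      (2⁻¹ : ℝ) • ((Y₁ + X₁) ⊗ₖ (Y₂ + X₂) + (X₁ - Y₁) ⊗ₖ (X₂ - Y₂)) := by
    ext
    simp only [sub_apply, add_apply, smul_apply, kroneckerMap_apply, RCLike.real_smul_eq_coe_mul]
    push_cast
    ring
  rw [h]
  exact ((h₁'.kronecker h₂').add (h₁.kronecker h₂)).smul (by norm_num)

theorem trace_reindex {α : Type*} [AddCommMonoid α] (e : m ≃ n) (M : Matrix m m α) :
    (reindex e e M).trace = M.trace :=
  Fintype.sum_equiv e.symm _ _ fun _ => rfl

theorem reindex_prodProdProdComm_kronecker {α : Type*} [CommSemiring α]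
    {l₁ l₂ n₁ n₂ l₁' l₂' n₁' n₂' : Type*}
    (A₁ : Matrix l₁ l₁' α) (B₁ : Matrix n₁ n₁' α) (A₂ : Matrix l₂ l₂' α) (B₂ : Matrix n₂ n₂' α) :
    reindex (Equiv.prodProdProdComm l₁ n₁ l₂ n₂) (Equiv.prodProdProdComm l₁' n₁' l₂' n₂')
      ((A₁ ⊗ₖ B₁) ⊗ₖ (A₂ ⊗ₖ B₂)) = (A₁ ⊗ₖ A₂) ⊗ₖ (B₁ ⊗ₖ B₂) := by
  ext
  simp only [reindex_apply, submatrix_apply, kroneckerMap_apply, Equiv.prodProdProdComm_symm,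
    Equiv.prodProdProdComm_apply]
  ring

end Matrix

theorem Real.sSup_mul_sSup_le_of_mul_mem {S₁ S₂ S : Set ℝ} (hS : BddAbove S)
    (h₁ : ∀ r ∈ S₁, 0 ≤ r) (h₂ : ∀ r ∈ S₂, 0 ≤ r) (h : ∀ r ∈ S, 0 ≤ r)
    (hmul : ∀ r₁ ∈ S₁, ∀ r₂ ∈ S₂, r₁ * r₂ ∈ S) :
    sSup S₁ * sSup S₂ ≤ sSup S := by
  have hS0 : 0 ≤ sSup S := Real.sSup_nonneg h
  have hmul_sSup : ∀ r₁ ∈ S₁, r₁ * sSup S₂ ≤ sSup S := fun r₁ hr₁ => by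
    rw [← smul_eq_mul, ← Real.sSup_smul_of_nonneg (h₁ r₁ hr₁)]
    refine Real.sSup_le ?_ hS0
    rintro _ ⟨r₂, hr₂, rfl⟩
    exact le_csSup hS (hmul r₁ hr₁ r₂ hr₂)
  rw [mul_comm, ← smul_eq_mul, ← Real.sSup_smul_of_nonneg (Real.sSup_nonneg h₂)]
  refine Real.sSup_le ?_ hS0
  rintro _ ⟨r₁, hr₁, rfl⟩
  exact (mul_comm _ _).trans_le (hmul_sSup r₁ hr₁)

section Gamma

variable {A B : Type*} [Fintype A] [Fintype B]

theorem trace_ptB (R : Matrix (A × B) (A × B) ℂ) : (ptB R).trace = R.trace := rfl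

variable [DecidableEq B]

structure IsGammaFeasible (R : Matrix (A × B) (A × B) ℂ) (ρ : Matrix A A ℂ) : Prop where
  posSemidef : R.PosSemidef
  posSemidef_density : ρ.PosSemidef
  trace_density : ρ.trace = 1
  posSemidef_sub_ptB : (ρ ⊗ₖ (1 : Matrix B B ℂ) - ptB R).PosSemidef
  posSemidef_ptB_add : (ptB R + ρ ⊗ₖ (1 : Matrix B B ℂ)).PosSemidef

def gammaValues (J : Matrix (A × B) (A × B) ℂ) : Set ℝ :=
  {r | ∃ R ρ, IsGammaFeasible R ρ ∧ r = ((J * R).trace).re}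

theorem Gamma_eq_sSup_gammaValues [DecidableEq A] (J : Matrix (A × B) (A × B) ℂ) :
    Gamma J = sSup (gammaValues J) :=
  congrArg sSup <| Set.ext fun _ =>
    ⟨fun ⟨R, ρ, h₁, h₂, h₃, h₄, h₅, hr⟩ => ⟨R, ρ, ⟨h₁, h₂, h₃, h₄, h₅⟩, hr⟩,
      fun ⟨R, ρ, ⟨h₁, h₂, h₃, h₄, h₅⟩, hr⟩ => ⟨R, ρ, h₁, h₂, h₃, h₄, h₅, hr⟩⟩

theorem IsGammaFeasible.re_trace_le_card {R : Matrix (A × B) (A × B) ℂ} {ρ : Matrix A A ℂ}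
    (h : IsGammaFeasible R ρ) : R.trace.re ≤ Fintype.card B := by
  have htr := (Complex.nonneg_iff.mp h.posSemidef_sub_ptB.trace_nonneg).1
  rw [trace_sub, trace_kronecker, h.trace_density, one_mul, trace_one, trace_ptB] at htr
  simpa [sub_nonneg] using htr

theorem gammaValues_nonneg {J : Matrix (A × B) (A × B) ℂ} (hJ : J.PosSemidef) :
    ∀ r ∈ gammaValues J, 0 ≤ r := by
  rintro _ ⟨R, ρ, h, rfl⟩
  exact (Complex.nonneg_iff.mp (hJ.trace_mul_nonneg h.posSemidef)).1

theorem bddAbove_gammaValues (J : Matrix (A × B) (A × B) ℂ) : BddAbove (gammaValues J) := by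
  refine ⟨(∑ i, ∑ j, ‖J i j‖) * Fintype.card B, ?_⟩
  rintro _ ⟨R, ρ, h, rfl⟩
  exact (PosSemidef.re_trace_mul_le J h.posSemidef).trans
    (mul_le_mul_of_nonneg_left h.re_trace_le_card (by positivity))

end Gamma

section TensorProduct

variable {A₁ B₁ A₂ B₂ : Type*}

theorem ptB_reindex_kronecker (R₁ : Matrix (A₁ × B₁) (A₁ × B₁) ℂ)
    (R₂ : Matrix (A₂ × B₂) (A₂ × B₂) ℂ) :
    ptB (reindex (Equiv.prodProdProdComm A₁ B₁ A₂ B₂) (Equiv.prodProdProdComm A₁ B₁ A₂ B₂)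
      (R₁ ⊗ₖ R₂)) =
      reindex (Equiv.prodProdProdComm A₁ B₁ A₂ B₂) (Equiv.prodProdProdComm A₁ B₁ A₂ B₂)
        (ptB R₁ ⊗ₖ ptB R₂) :=
  rfl

variable [Fintype A₁] [Fintype B₁] [Fintype A₂] [Fintype B₂] [DecidableEq B₁] [DecidableEq B₂]

theorem IsGammaFeasible.reindex_kronecker {R₁ : Matrix (A₁ × B₁) (A₁ × B₁) ℂ}
    {ρ₁ : Matrix A₁ A₁ ℂ} {R₂ : Matrix (A₂ × B₂) (A₂ × B₂) ℂ} {ρ₂ : Matrix A₂ A₂ ℂ}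
    (h₁ : IsGammaFeasible R₁ ρ₁) (h₂ : IsGammaFeasible R₂ ρ₂) :
    IsGammaFeasible
      (reindex (Equiv.prodProdProdComm A₁ B₁ A₂ B₂) (Equiv.prodProdProdComm A₁ B₁ A₂ B₂)
        (R₁ ⊗ₖ R₂)) (ρ₁ ⊗ₖ ρ₂) where
  posSemidef := (h₁.posSemidef.kronecker h₂.posSemidef).submatrix _
  posSemidef_density := h₁.posSemidef_density.kronecker h₂.posSemidef_density
  trace_density := by rw [trace_kronecker, h₁.trace_density, h₂.trace_density, one_mul]
  posSemidef_sub_ptB := by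
    rw [ptB_reindex_kronecker, ← one_kronecker_one, ← reindex_prodProdProdComm_kronecker]
    exact (posSemidef_kronecker_sub_kronecker h₁.posSemidef_sub_ptB h₁.posSemidef_ptB_add
      h₂.posSemidef_sub_ptB h₂.posSemidef_ptB_add).submatrix _
  posSemidef_ptB_add := by
    rw [ptB_reindex_kronecker, ← one_kronecker_one, ← reindex_prodProdProdComm_kronecker]
    exact (posSemidef_kronecker_add_kronecker h₁.posSemidef_sub_ptB h₁.posSemidef_ptB_add
      h₂.posSemidef_sub_ptB h₂.posSemidef_ptB_add).submatrix _

theorem mul_mem_gammaValues_reindex_kronecker {J₁ : Matrix (A₁ × B₁) (A₁ × B₁) ℂ}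
    {J₂ : Matrix (A₂ × B₂) (A₂ × B₂) ℂ} (hJ₁ : J₁.PosSemidef) {r₁ r₂ : ℝ}
    (hr₁ : r₁ ∈ gammaValues J₁) (hr₂ : r₂ ∈ gammaValues J₂) :
    r₁ * r₂ ∈ gammaValues
      (reindex (Equiv.prodProdProdComm A₁ B₁ A₂ B₂) (Equiv.prodProdProdComm A₁ B₁ A₂ B₂)
        (J₁ ⊗ₖ J₂)) := by
  obtain ⟨R₁, ρ₁, h₁, rfl⟩ := hr₁
  obtain ⟨R₂, ρ₂, h₂, rfl⟩ := hr₂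
  refine ⟨_, _, h₁.reindex_kronecker h₂, ?_⟩
  have him : (J₁ * R₁).trace.im = 0 :=
    (Complex.nonneg_iff.mp (hJ₁.trace_mul_nonneg h₁.posSemidef)).2.symm
  rw [reindex_apply, reindex_apply, submatrix_mul_equiv, ← reindex_apply, trace_reindex,
    ← mul_kronecker_mul, trace_kronecker, Complex.mul_re, him, zero_mul, sub_zero]

end TensorProduct

/-- `Γ` is supermultiplicative under tensor products:
`Γ(N₁ ⊗ N₂) ≥ Γ(N₁) · Γ(N₂)`, where the Choi matrix of the tensor product channel is
`J₁ ⊗ J₂` after reordering the tensor factors from `(A₁×B₁)×(A₂×B₂)` to `(A₁×A₂)×(B₁×B₂)`. -/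
theorem stmt_2 {A₁ B₁ A₂ B₂ : Type*}
    [Fintype A₁] [Fintype B₁] [Fintype A₂] [Fintype B₂]
    [DecidableEq A₁] [DecidableEq B₁] [DecidableEq A₂] [DecidableEq B₂]
    (J₁ : Matrix (A₁ × B₁) (A₁ × B₁) ℂ) (J₂ : Matrix (A₂ × B₂) (A₂ × B₂) ℂ)
    (hJ₁ : J₁.PosSemidef) (hJ₂ : J₂.PosSemidef) :
    Gamma J₁ * Gamma J₂ ≤
      Gamma ((Matrix.reindex (Equiv.prodProdProdComm A₁ B₁ A₂ B₂)
        (Equiv.prodProdProdComm A₁ B₁ A₂ B₂)) (J₁ ⊗ₖ J₂)) := by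
  have hJ := (hJ₁.kronecker hJ₂).submatrix (Equiv.prodProdProdComm A₁ B₁ A₂ B₂).symm
  simp only [Gamma_eq_sSup_gammaValues]
  exact Real.sSup_mul_sSup_le_of_mul_mem (bddAbove_gammaValues _) (gammaValues_nonneg hJ₁)
    (gammaValues_nonneg hJ₂) (gammaValues_nonneg hJ)
    fun _ hr₁ _ hr₂ => mul_mem_gammaValues_reindex_kronecker hJ₁ hr₁ hr₂
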